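/- arXiv:1804.06084 — 4 statements merged into one kernel-verified Lean document; each statement's English description precedes it below -/
import Mathlib

section
/- Fix a constant C > 0 and for positive integers q, ℓ let N(q,ℓ) denote the number of pairs (p,r) ∈ ℤ² satisfying q r − ℓ p = 0 and |p| ≤ C q. Then for every integer k ≥ 1 there is a constant C' > 0 such that for all real T ≥ 2, ∑_{q=1}^{⌊T⌋} ∑_{ℓ=1}^{q} N(q,ℓ)^k ≤ C' T^{k+1} (log T)^{ν_k}, where ν_1 = 1 and ν_k = 0 for k ≥ 2. -/
open Filter

noncomputable section

/-- `N(q,ℓ)`: the number of pairs `(p,r) ∈ ℤ²` with `q r − ℓ p = 0` and `|p| ≤ C q`. -/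
def Nsol (C : ℝ) (q ℓ : ℕ) : ℕ :=
  Set.ncard {pr : ℤ × ℤ |
    (q : ℤ) * pr.2 - (ℓ : ℤ) * pr.1 = 0 ∧ (|pr.1| : ℝ) ≤ C * (q : ℝ)}

/-- Structure lemma: every solution has the form `(q' m, ℓ' m)` with `|m| ≤ C d`,
where `d = gcd q ℓ`. Hence `N(q,ℓ) ≤ (2C+1)·gcd(q,ℓ)`. -/
lemma Nsol_le_gcd (C : ℝ) (hC : 0 < C) {q ℓ : ℕ} (hq : 1 ≤ q) (hl : 1 ≤ ℓ) :
    (Nsol C q ℓ : ℝ) ≤ (2 * C + 1) * (Nat.gcd q ℓ : ℝ) := by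
  set d : ℕ := Nat.gcd q ℓ with hd
  have hdpos : 0 < d := Nat.gcd_pos_of_pos_left ℓ hq
  set q' : ℕ := q / d with hq'
  set l' : ℕ := ℓ / d with hl'
  have hqd : d * q' = q := Nat.mul_div_cancel' (Nat.gcd_dvd_left q ℓ)
  have hld : d * l' = ℓ := Nat.mul_div_cancel' (Nat.gcd_dvd_right q ℓ)
  have hq'pos : 0 < q' :=
    Nat.div_pos (Nat.le_of_dvd (by omega) (Nat.gcd_dvd_left q ℓ)) hdpos
  have cop : Nat.Coprime q' l' := Nat.coprime_div_gcd_div_gcd hdpos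
  set M : ℤ := ⌊C * (d : ℝ)⌋ with hM
  have hMnn : 0 ≤ M := Int.floor_nonneg.mpr (by positivity)
  -- the solution set is contained in the image of an interval
  have hsub : {pr : ℤ × ℤ |
      (q : ℤ) * pr.2 - (ℓ : ℤ) * pr.1 = 0 ∧ (|pr.1| : ℝ) ≤ C * (q : ℝ)} ⊆
      ↑((Finset.Icc (-M) M).image (fun m : ℤ => ((q' : ℤ) * m, (l' : ℤ) * m))) := by
    rintro ⟨p, r⟩ ⟨h1, h2⟩
    simp only [Set.mem_setOf_eq] at h1 h2
    have hqz : (q : ℤ) = (d : ℤ) * (q' : ℤ) := by exact_mod_cast hqd.symm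
    have hlz : (ℓ : ℤ) = (d : ℤ) * (l' : ℤ) := by exact_mod_cast hld.symm
    have hdz : (d : ℤ) ≠ 0 := by exact_mod_cast hdpos.ne'
    have hq'z : (q' : ℤ) ≠ 0 := by exact_mod_cast hq'pos.ne'
    have h1' : (q' : ℤ) * r = (l' : ℤ) * p := by
      have : (d : ℤ) * ((q' : ℤ) * r) = (d : ℤ) * ((l' : ℤ) * p) := by
        rw [hqz, hlz] at h1; linarith
      exact mul_left_cancel₀ hdz this
    have hcopz : IsCoprime (q' : ℤ) (l' : ℤ) := Int.isCoprime_iff_gcd_eq_one.mpr cop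
    have hdvd : (q' : ℤ) ∣ p := by
      refine hcopz.dvd_of_dvd_mul_left ?_
      exact ⟨r, by linarith⟩
    obtain ⟨m, hm⟩ := hdvd
    have hr : r = (l' : ℤ) * m := by
      apply mul_left_cancel₀ hq'z
      rw [h1', hm]; ring
    -- the bound on m
    have hpm : ((p : ℤ) : ℝ) = (q' : ℝ) * ((m : ℤ) : ℝ) := by rw [hm]; push_cast; ring
    have hq'R : (0 : ℝ) < (q' : ℝ) := by exact_mod_cast hq'pos
    have hqR : ((q : ℕ) : ℝ) = (d : ℝ) * (q' : ℝ) := by exact_mod_cast hqd.symm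
    have h3 : |((m : ℤ) : ℝ)| ≤ C * (d : ℝ) := by
      have h4 : (q' : ℝ) * |((m : ℤ) : ℝ)| ≤ C * ((d : ℝ) * (q' : ℝ)) := by
        calc (q' : ℝ) * |((m : ℤ) : ℝ)| = |((p : ℤ) : ℝ)| := by
              rw [hpm, abs_mul, abs_of_pos hq'R]
          _ ≤ C * ((d : ℝ) * (q' : ℝ)) := by rw [← hqR]; exact h2
      nlinarith [abs_nonneg ((m : ℤ) : ℝ)]
    have habs1 : -M ≤ m := by
      rw [neg_le, hM, Int.le_floor]
      push_cast
      calc (-(m : ℝ)) ≤ |((m : ℤ) : ℝ)| := by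
            have := neg_le_abs ((m : ℤ) : ℝ); push_cast at this ⊢; linarith
        _ ≤ C * (d : ℝ) := h3
    have habs2 : m ≤ M := by
      rw [hM, Int.le_floor]
      exact (le_abs_self _).trans h3
    simp only [Finset.coe_image, Set.mem_image, Finset.mem_coe, Finset.mem_Icc]
    exact ⟨m, ⟨habs1, habs2⟩, by rw [hm, hr]⟩
  have hfin : ((Finset.Icc (-M) M).image
      (fun m : ℤ => ((q' : ℤ) * m, (l' : ℤ) * m)) : Set (ℤ × ℤ)).Finite :=
    Finset.finite_toSet _
  have h1 : Nsol C q ℓ ≤ ((Finset.Icc (-M) M).image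
      (fun m : ℤ => ((q' : ℤ) * m, (l' : ℤ) * m))).card := by
    rw [Nsol, ← Set.ncard_coe_finset]
    exact Set.ncard_le_ncard hsub hfin
  have h2 : ((Finset.Icc (-M) M).image
      (fun m : ℤ => ((q' : ℤ) * m, (l' : ℤ) * m))).card ≤ (Finset.Icc (-M) M).card :=
    Finset.card_image_le
  have h3 : ((Finset.Icc (-M) M).card : ℝ) = 2 * (M : ℝ) + 1 := by
    rw [Int.card_Icc]
    have h : M + 1 - (-M) = 2 * M + 1 := by ring
    rw [h, ← Int.cast_natCast (R := ℝ), Int.toNat_of_nonneg (show (0:ℤ) ≤ 2 * M + 1 by omega)]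
    push_cast; ring
  have hMle : (M : ℝ) ≤ C * (d : ℝ) := Int.floor_le _
  have hd1 : (1 : ℝ) ≤ (d : ℝ) := by exact_mod_cast hdpos
  calc (Nsol C q ℓ : ℝ) ≤ ((Finset.Icc (-M) M).card : ℝ) := by exact_mod_cast h1.trans h2
    _ = 2 * (M : ℝ) + 1 := h3
    _ ≤ 2 * (C * (d : ℝ)) + (d : ℝ) := by linarith
    _ = (2 * C + 1) * (d : ℝ) := by ring

/-- Key combinatorial bound, entirely in `ℕ`. -/
lemma gcd_pow_sum_le (n k : ℕ) :
    ∑ q ∈ Finset.Icc 1 n, ∑ ℓ ∈ Finset.Icc 1 q, Nat.gcd q ℓ ^ k ≤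
      ∑ d ∈ Finset.Icc 1 n, d ^ k * ((n / d) * (n / d)) := by
  -- step 1: pointwise bound by a sum over common divisors
  have step1 : ∀ q ∈ Finset.Icc 1 n, ∀ ℓ ∈ Finset.Icc 1 q,
      Nat.gcd q ℓ ^ k ≤ ∑ d ∈ Finset.Icc 1 n, if d ∣ q ∧ d ∣ ℓ then d ^ k else 0 := by
    intro q hqmem ℓ hlmem
    rw [Finset.mem_Icc] at hqmem hlmem
    have hg : Nat.gcd q ℓ ∈ Finset.Icc 1 n := by
      rw [Finset.mem_Icc]
      constructor
      · exact Nat.gcd_pos_of_pos_left ℓ (by omega)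
      · exact le_trans (Nat.gcd_le_left ℓ (by omega)) hqmem.2
    have := Finset.single_le_sum
      (f := fun d => if d ∣ q ∧ d ∣ ℓ then d ^ k else 0)
      (fun i _ => by positivity) hg
    simpa [Nat.gcd_dvd_left, Nat.gcd_dvd_right] using this
  calc ∑ q ∈ Finset.Icc 1 n, ∑ ℓ ∈ Finset.Icc 1 q, Nat.gcd q ℓ ^ k
      ≤ ∑ q ∈ Finset.Icc 1 n, ∑ ℓ ∈ Finset.Icc 1 q,
          ∑ d ∈ Finset.Icc 1 n, (if d ∣ q ∧ d ∣ ℓ then d ^ k else 0) := by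
        refine Finset.sum_le_sum fun q hq => Finset.sum_le_sum fun ℓ hℓ => step1 q hq ℓ hℓ
    _ = ∑ q ∈ Finset.Icc 1 n, ∑ d ∈ Finset.Icc 1 n,
          ∑ ℓ ∈ Finset.Icc 1 q, (if d ∣ q ∧ d ∣ ℓ then d ^ k else 0) := by
        refine Finset.sum_congr rfl fun q _ => Finset.sum_comm
    _ = ∑ q ∈ Finset.Icc 1 n, ∑ d ∈ Finset.Icc 1 n,
          (if d ∣ q then d ^ k * (q / d) else 0) := by
        refine Finset.sum_congr rfl fun q _ => Finset.sum_congr rfl fun d _ => ?_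
        by_cases hdq : d ∣ q
        · simp only [hdq, true_and, if_true]
          rw [← Finset.sum_filter]
          have hcard : ((Finset.Icc 1 q).filter (d ∣ ·)).card = q / d := by
            rw [show Finset.Icc 1 q = Finset.Ioc 0 q from Finset.Icc_add_one_left_eq_Ioc 0 q]
            exact Nat.Ioc_filter_dvd_card_eq_div q d
          rw [Finset.sum_const, hcard, smul_eq_mul, mul_comm]
        · simp [hdq]
    _ = ∑ d ∈ Finset.Icc 1 n, ∑ q ∈ Finset.Icc 1 n,
          (if d ∣ q then d ^ k * (q / d) else 0) := Finset.sum_comm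
    _ ≤ ∑ d ∈ Finset.Icc 1 n, d ^ k * ((n / d) * (n / d)) := by
        refine Finset.sum_le_sum fun d _ => ?_
        rw [← Finset.sum_filter]
        have hcard : ((Finset.Icc 1 n).filter (d ∣ ·)).card = n / d := by
          rw [show Finset.Icc 1 n = Finset.Ioc 0 n from Finset.Icc_add_one_left_eq_Ioc 0 n]
          exact Nat.Ioc_filter_dvd_card_eq_div n d
        calc ∑ q ∈ (Finset.Icc 1 n).filter (d ∣ ·), d ^ k * (q / d)
            ≤ ((Finset.Icc 1 n).filter (d ∣ ·)).card • (d ^ k * (n / d)) := by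
              refine Finset.sum_le_card_nsmul _ _ _ fun q hq => ?_
              have hqn : q ≤ n := (Finset.mem_Icc.mp (Finset.mem_filter.mp hq).1).2
              exact Nat.mul_le_mul_left _ (Nat.div_le_div_right hqn)
          _ = d ^ k * ((n / d) * (n / d)) := by rw [hcard, smul_eq_mul]; ring

theorem sum_Nsol_pow_bound
    (C : ℝ) (hC : 0 < C) (k : ℕ) (hk : 1 ≤ k) :
    ∃ C' : ℝ, 0 < C' ∧ ∀ T : ℝ, 2 ≤ T →
      (∑ q ∈ Finset.Icc 1 ⌊T⌋₊, ∑ ℓ ∈ Finset.Icc 1 q, ((Nsol C q ℓ : ℝ)) ^ k)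
        ≤ C' * T ^ (k + 1) * Real.log T ^ (if k = 1 then 1 else 0) := by
  refine ⟨(2 * C + 1) ^ k * (1 + 1 / Real.log 2), by positivity, fun T hT => ?_⟩
  set n : ℕ := ⌊T⌋₊ with hn
  have hT0 : (0 : ℝ) < T := by linarith
  have hnT : (n : ℝ) ≤ T := Nat.floor_le hT0.le
  have hlog2 : (0 : ℝ) < Real.log 2 := Real.log_pos (by norm_num)
  have hlogT : Real.log 2 ≤ Real.log T := Real.log_le_log (by norm_num) hT
  have hlogT0 : (0 : ℝ) < Real.log T := lt_of_lt_of_le hlog2 hlogT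
  set A : ℝ := (2 * C + 1) ^ k with hA
  have hApos : (0 : ℝ) < A := by positivity
  -- bound the LHS by A times the gcd sum
  have step1 : (∑ q ∈ Finset.Icc 1 n, ∑ ℓ ∈ Finset.Icc 1 q, ((Nsol C q ℓ : ℝ)) ^ k)
      ≤ A * ((∑ q ∈ Finset.Icc 1 n, ∑ ℓ ∈ Finset.Icc 1 q, Nat.gcd q ℓ ^ k : ℕ) : ℝ) := by
    push_cast
    rw [Finset.mul_sum]
    refine Finset.sum_le_sum fun q hq => ?_
    rw [Finset.mul_sum]
    refine Finset.sum_le_sum fun ℓ hℓ => ?_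
    rw [Finset.mem_Icc] at hq hℓ
    have hb := Nsol_le_gcd C hC (by omega : 1 ≤ q) (by omega : 1 ≤ ℓ)
    calc ((Nsol C q ℓ : ℝ)) ^ k ≤ ((2 * C + 1) * (Nat.gcd q ℓ : ℝ)) ^ k :=
          pow_le_pow_left₀ (Nat.cast_nonneg _) hb k
      _ = A * (Nat.gcd q ℓ : ℝ) ^ k := by rw [hA, mul_pow]
  have key := gcd_pow_sum_le n k
  rcases eq_or_ne k 1 with hk1 | hk1
  · -- k = 1 : harmonic-sum bound
    subst hk1
    have natbd : ∑ d ∈ Finset.Icc 1 n, d ^ 1 * ((n / d) * (n / d)) ≤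
        ∑ d ∈ Finset.Icc 1 n, n * (n / d) := by
      refine Finset.sum_le_sum fun d _ => ?_
      have : d ^ 1 * (n / d) ≤ n := by
        rw [pow_one]; exact Nat.mul_div_le n d
      calc d ^ 1 * ((n / d) * (n / d)) = d ^ 1 * (n / d) * (n / d) := by ring
        _ ≤ n * (n / d) := Nat.mul_le_mul_right _ this
    have realbd : ((∑ d ∈ Finset.Icc 1 n, n * (n / d) : ℕ) : ℝ) ≤
        (n : ℝ) * (n : ℝ) * (1 + Real.log n) := by
      push_cast
      have h1 : ∑ d ∈ Finset.Icc 1 n, (n : ℝ) * ((n / d : ℕ) : ℝ) ≤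
          ∑ d ∈ Finset.Icc 1 n, (n : ℝ) * ((n : ℝ) / (d : ℝ)) := by
        refine Finset.sum_le_sum fun d _ => ?_
        exact mul_le_mul_of_nonneg_left (Nat.cast_div_le) (Nat.cast_nonneg n)
      have h2 : ∑ d ∈ Finset.Icc 1 n, (n : ℝ) * ((n : ℝ) / (d : ℝ)) =
          (n : ℝ) * (n : ℝ) * ∑ d ∈ Finset.Icc 1 n, ((d : ℝ))⁻¹ := by
        rw [Finset.mul_sum]
        refine Finset.sum_congr rfl fun d _ => ?_
        field_simp
      have h3 : ∑ d ∈ Finset.Icc 1 n, ((d : ℝ))⁻¹ ≤ 1 + Real.log n := by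
        have := harmonic_le_one_add_log n
        rw [harmonic_eq_sum_Icc] at this
        push_cast at this
        exact this
      calc ∑ d ∈ Finset.Icc 1 n, (n : ℝ) * ((n / d : ℕ) : ℝ)
          ≤ (n : ℝ) * (n : ℝ) * ∑ d ∈ Finset.Icc 1 n, ((d : ℝ))⁻¹ := by rw [← h2]; exact h1
        _ ≤ (n : ℝ) * (n : ℝ) * (1 + Real.log n) := by
            refine mul_le_mul_of_nonneg_left h3 (by positivity)
    have hlogn : Real.log n ≤ Real.log T := by
      rcases Nat.eq_zero_or_pos n with h | h
      · simp [h]; positivity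
      · exact Real.log_le_log (by exact_mod_cast h) hnT
    have final : (n : ℝ) * (n : ℝ) * (1 + Real.log n) ≤
        (1 + 1 / Real.log 2) * (T * T) * Real.log T := by
      have h4 : (1 : ℝ) + Real.log n ≤ 1 + Real.log T := by linarith
      have h5 : (1 : ℝ) + Real.log T ≤ (1 + 1 / Real.log 2) * Real.log T := by
        rw [add_mul, one_mul, div_mul_eq_mul_div]
        have : (1 : ℝ) ≤ Real.log T / Real.log 2 := (one_le_div hlog2).mpr hlogT
        have h6 : (1 : ℝ) * Real.log T / Real.log 2 = Real.log T / Real.log 2 := by ring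
        linarith [this]
      have hnn : (0 : ℝ) ≤ (n : ℝ) := Nat.cast_nonneg n
      have h7 : (n : ℝ) * (n : ℝ) ≤ T * T := mul_le_mul hnT hnT hnn hT0.le
      have h8 : (0 : ℝ) ≤ 1 + Real.log n := by
        rcases Nat.eq_zero_or_pos n with h | h
        · simp [h]
        · have : (0:ℝ) ≤ Real.log n := Real.log_natCast_nonneg n
          linarith
      calc (n : ℝ) * (n : ℝ) * (1 + Real.log n)
          ≤ (T * T) * (1 + Real.log n) := mul_le_mul_of_nonneg_right h7 h8
        _ ≤ (T * T) * ((1 + 1 / Real.log 2) * Real.log T) := by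
            refine mul_le_mul_of_nonneg_left (le_trans h4 h5) (by positivity)
        _ = (1 + 1 / Real.log 2) * (T * T) * Real.log T := by ring
    have castkey : ((∑ q ∈ Finset.Icc 1 n, ∑ ℓ ∈ Finset.Icc 1 q, Nat.gcd q ℓ ^ 1 : ℕ) : ℝ)
        ≤ ((∑ d ∈ Finset.Icc 1 n, n * (n / d) : ℕ) : ℝ) := by
      exact_mod_cast key.trans natbd
    have goal_eq : Real.log T ^ (if (1 : ℕ) = 1 then 1 else 0) = Real.log T := by norm_num
    rw [goal_eq]
    calc (∑ q ∈ Finset.Icc 1 n, ∑ ℓ ∈ Finset.Icc 1 q, ((Nsol C q ℓ : ℝ)) ^ 1)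
        ≤ A * ((∑ q ∈ Finset.Icc 1 n, ∑ ℓ ∈ Finset.Icc 1 q, Nat.gcd q ℓ ^ 1 : ℕ) : ℝ) := step1
      _ ≤ A * ((1 + 1 / Real.log 2) * (T * T) * Real.log T) := by
          refine mul_le_mul_of_nonneg_left ?_ hApos.le
          exact le_trans (castkey.trans realbd) final
      _ = A * (1 + 1 / Real.log 2) * T ^ (1 + 1) * Real.log T := by ring
  · -- k ≥ 2 : everything stays polynomial
    obtain ⟨j, rfl⟩ : ∃ j, k = j + 2 := ⟨k - 2, by omega⟩
    have natbd : ∑ d ∈ Finset.Icc 1 n, d ^ (j + 2) * ((n / d) * (n / d)) ≤ n ^ (j + 3) := by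
      have hterm : ∀ d ∈ Finset.Icc 1 n,
          d ^ (j + 2) * ((n / d) * (n / d)) ≤ n ^ j * (n * n) := by
        intro d hd
        rw [Finset.mem_Icc] at hd
        have h1 : d * (n / d) ≤ n := Nat.mul_div_le n d
        have h2 : d ^ j ≤ n ^ j := Nat.pow_le_pow_left hd.2 j
        calc d ^ (j + 2) * ((n / d) * (n / d)) = d ^ j * ((d * (n / d)) * (d * (n / d))) := by
              ring
          _ ≤ n ^ j * (n * n) := Nat.mul_le_mul h2 (Nat.mul_le_mul h1 h1)
      calc ∑ d ∈ Finset.Icc 1 n, d ^ (j + 2) * ((n / d) * (n / d))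
          ≤ (Finset.Icc 1 n).card • (n ^ j * (n * n)) := Finset.sum_le_card_nsmul _ _ _ hterm
        _ = n * (n ^ j * (n * n)) := by rw [Nat.card_Icc, smul_eq_mul, Nat.add_sub_cancel]
        _ = n ^ (j + 3) := by ring
    have castkey : ((∑ q ∈ Finset.Icc 1 n, ∑ ℓ ∈ Finset.Icc 1 q, Nat.gcd q ℓ ^ (j + 2) : ℕ) : ℝ)
        ≤ ((n : ℝ)) ^ (j + 3) := by
      exact_mod_cast key.trans natbd
    have hTpow : ((n : ℝ)) ^ (j + 3) ≤ T ^ (j + 3) :=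
      pow_le_pow_left₀ (Nat.cast_nonneg n) hnT _
    have hCge : A ≤ A * (1 + 1 / Real.log 2) := by
      nlinarith [one_div_pos.mpr hlog2]
    simp only [if_neg hk1, pow_zero, mul_one]
    calc (∑ q ∈ Finset.Icc 1 n, ∑ ℓ ∈ Finset.Icc 1 q, ((Nsol C q ℓ : ℝ)) ^ (j + 2))
        ≤ A * ((∑ q ∈ Finset.Icc 1 n, ∑ ℓ ∈ Finset.Icc 1 q, Nat.gcd q ℓ ^ (j + 2) : ℕ) : ℝ) :=
          step1
      _ ≤ A * T ^ (j + 3) := by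
          refine mul_le_mul_of_nonneg_left (castkey.trans hTpow) hApos.le
      _ ≤ A * (1 + 1 / Real.log 2) * T ^ (j + 2 + 1) := by
          have : (j + 3) = (j + 2 + 1) := by omega
          rw [this]
          exact mul_le_mul_of_nonneg_right hCge (by positivity)
end
end

section
/- Fix integers m, n ≥ 1 and positive reals w_1,…,w_{m+n} with w_1 + ⋯ + w_m = w_{m+1} + ⋯ + w_{m+n}. Then there exist constants c_1, c_2, c_3 > 0 such that for all reals t' , t with 0 < t' < t there exists s̄ = (s_1,…,s_{m+n}) ∈ S^+ satisfying: (i) ⌊s̄⌋ ≥ c_1 (t − t'); (ii) min over 1 ≤ i ≤ m+n of (s_i − w_i t') ≥ c_2 (t − t'); (iii) s̄_t − s̄ = (z/m,…,z/m, z/n,…,z/n) (z/m in the first m coordinates and z/n in the last n coordinates) for some real z ≥ c_3 · min(t', t − t'). -/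
/-!
Let `c` be half the smallest weight and `z = c (t - t')`. Lowering `s̄_t` by
`(z/m, …, z/m, z/n, …, z/n)` keeps both block sums equal, and since `z/m, z/n ≤ z` while
`w_i (t - t') ≥ 2 z`, every coordinate stays at least `c (t - t')` above `w_i t' > 0`.
-/

open Finset

def BlockBalanced {m n : ℕ} (f : Fin (m + n) → ℝ) : Prop :=
  ∑ i ∈ univ.filter (fun i : Fin (m + n) => (i : ℕ) < m), f i =
    ∑ i ∈ univ.filter (fun i : Fin (m + n) => ¬ (i : ℕ) < m), f i

namespace BlockBalanced

variable {m n : ℕ} {f g : Fin (m + n) → ℝ}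

lemma sub (hf : BlockBalanced f) (hg : BlockBalanced g) : BlockBalanced (f - g) := by
  simp only [BlockBalanced, Pi.sub_apply, sum_sub_distrib] at *
  rw [hf, hg]

lemma mul_const (hf : BlockBalanced f) (c : ℝ) : BlockBalanced (fun i => f i * c) := by
  simp only [BlockBalanced, ← sum_mul] at *
  rw [hf]

end BlockBalanced

lemma card_filter_val_lt_add (m n : ℕ) : #{i : Fin (m + n) | (i : ℕ) < m} = m := by
  rw [Fin.card_filter_val_lt]; omega

lemma card_filter_not_val_lt_add (m n : ℕ) : #{i : Fin (m + n) | ¬ (i : ℕ) < m} = n := by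
  have := card_filter_add_card_filter_not (s := (univ : Finset (Fin (m + n))))
    (fun i => (i : ℕ) < m)
  rw [card_filter_val_lt_add, card_univ, Fintype.card_fin] at this
  omega

noncomputable def blockShift (m n : ℕ) (z : ℝ) : Fin (m + n) → ℝ :=
  fun i => if (i : ℕ) < m then z / m else z / n

lemma blockBalanced_blockShift {m n : ℕ} (hm : m ≠ 0) (hn : n ≠ 0) (z : ℝ) :
    BlockBalanced (blockShift m n z) := by
  have first :
      ∑ i ∈ univ.filter (fun i : Fin (m + n) => (i : ℕ) < m), blockShift m n z i = z := by
    simp only [blockShift]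
    rw [sum_ite_of_true fun i hi => (mem_filter.1 hi).2, sum_const,
      card_filter_val_lt_add, nsmul_eq_mul]
    field_simp
  have second :
      ∑ i ∈ univ.filter (fun i : Fin (m + n) => ¬ (i : ℕ) < m), blockShift m n z i = z := by
    simp only [blockShift]
    rw [sum_ite_of_false fun i hi => (mem_filter.1 hi).2, sum_const,
      card_filter_not_val_lt_add, nsmul_eq_mul]
    field_simp
  rw [BlockBalanced, first, second]

lemma blockShift_le {m n : ℕ} (hm : 1 ≤ m) (hn : 1 ≤ n) {z : ℝ} (hz : 0 ≤ z)
    (i : Fin (m + n)) :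
    blockShift m n z i ≤ z := by
  unfold blockShift
  split_ifs
  · exact div_le_self hz (by exact_mod_cast hm)
  · exact div_le_self hz (by exact_mod_cast hn)

theorem exists_intermediate_cone_point
    (m n : ℕ) (hm : 1 ≤ m) (hn : 1 ≤ n)
    (w : Fin (m + n) → ℝ) (hw : ∀ i, 0 < w i)
    (hbal : ∑ i ∈ Finset.univ.filter (fun i : Fin (m + n) => (i : ℕ) < m), w i =
            ∑ i ∈ Finset.univ.filter (fun i : Fin (m + n) => ¬ (i : ℕ) < m), w i) :
    ∃ c₁ c₂ c₃ : ℝ, 0 < c₁ ∧ 0 < c₂ ∧ 0 < c₃ ∧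
      ∀ t' t : ℝ, 0 < t' → t' < t →
        ∃ s : Fin (m + n) → ℝ,
          -- s̄ ∈ S⁺
          (∀ i, 0 < s i) ∧
          (∑ i ∈ Finset.univ.filter (fun i : Fin (m + n) => (i : ℕ) < m), s i =
           ∑ i ∈ Finset.univ.filter (fun i : Fin (m + n) => ¬ (i : ℕ) < m), s i) ∧
          -- (i) ⌊s̄⌋ ≥ c₁ (t − t')
          (∀ i, c₁ * (t - t') ≤ s i) ∧
          -- (ii) ⌊s̄ − s̄_{t'}⌋ ≥ c₂ (t − t')
          (∀ i, c₂ * (t - t') ≤ s i - w i * t') ∧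
          -- (iii) s̄_t − s̄ = (z/m,…,z/m,z/n,…,z/n) with z ≥ c₃ min(t', t − t')
          (∃ z : ℝ, c₃ * min t' (t - t') ≤ z ∧
            ∀ i : Fin (m + n),
              w i * t - s i = if (i : ℕ) < m then z / m else z / n) := by
  have hne : (univ : Finset (Fin (m + n))).Nonempty := ⟨⟨0, by omega⟩, mem_univ _⟩
  set W := univ.inf' hne w
  have hW : 0 < W := (lt_inf'_iff hne).2 fun i _ => hw i
  have hWw : ∀ i, W ≤ w i := fun i => inf'_le w (mem_univ i)
  refine ⟨W / 2, W / 2, W / 2, by positivity, by positivity, by positivity, ?_⟩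
  intro t' t ht' htt'
  have hdt : 0 < t - t' := sub_pos.2 htt'
  have hz : 0 ≤ W / 2 * (t - t') := by positivity
  have hgap : ∀ i, W / 2 * (t - t') ≤
      w i * t - blockShift m n (W / 2 * (t - t')) i - w i * t' := fun i => by
    linarith [blockShift_le hm hn hz i, mul_le_mul_of_nonneg_right (hWw i) hdt.le]
  have hlower : ∀ i, W / 2 * (t - t') ≤ w i * t - blockShift m n (W / 2 * (t - t')) i :=
    fun i => by linarith [hgap i, mul_pos (hw i) ht']
  exact ⟨fun i => w i * t - blockShift m n (W / 2 * (t - t')) i,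
    fun i => (by positivity : 0 < W / 2 * (t - t')).trans_le (hlower i),
    (BlockBalanced.mul_const hbal t).sub (blockBalanced_blockShift (by omega) (by omega) _),
    hlower, hgap, W / 2 * (t - t'), by gcongr; exact min_le_right _ _,
    fun i => by simp [blockShift]⟩
end

section
/- Let r ≥ 1 and let real numbers satisfy 0 = α_0 < β_1 < α_1 = (3+r)β_1 < β_2 < α_2 = (3+r)β_2 < ⋯ < β_r < α_r = (3+r)β_r < β_{r+1}. Then ℝ_+^{r+1} = Δ(β_{r+1}) ∪ ⋃_{j=0}^{r} ⋃_{Q} Δ_Q(α_j, β_{j+1}), where the inner union runs over all set partitions Q of {0,1,…,r} with at least two parts; that is, every s̄ ∈ ℝ_+^{r+1} either satisfies |s_i − s_j| ≤ β_{r+1} for all i,j, or lies in Δ_Q(α_j, β_{j+1}) for some 0 ≤ j ≤ r and some partition Q of {0,…,r} with |Q| ≥ 2. -/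
/-!
Sort the coordinates of `s̄`. Since `β_{j+1} ≤ β_{j'} ≤ α_{j'} / r` for `j < j'`, the `r + 1` windows
`(α_j / r, β_{j+1}]` are pairwise disjoint, so one of them contains none of the `r` gaps between
consecutive sorted coordinates. Cutting the sorted tuple at its gaps larger than `β_{j+1}` gives
clusters that are more than `β_{j+1}` apart and whose diameter is at most `r · (α_j / r) = α_j`.
There are at least two clusters unless `s̄ ∈ Δ(α_j) ⊆ Δ(β_{r+1})`.
-/

open Finset

section MonotoneSequence

variable {u : ℕ → ℝ}

theorem sub_le_mul_of_forall_sub_le {c : ℝ} {p q : ℕ} (hpq : p ≤ q)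
    (h : ∀ n ∈ Ico p q, u (n + 1) - u n ≤ c) : u q - u p ≤ (q - p : ℕ) * c := by
  rw [← sum_Ico_sub u hpq, ← Nat.card_Ico, ← nsmul_eq_mul]
  exact sum_le_card_nsmul _ _ _ h

theorem lt_sub_of_lt_sub_succ (hu : Monotone u) {b : ℝ} {p n q : ℕ} (hpn : p ≤ n) (hnq : n < q)
    (hn : b < u (n + 1) - u n) : b < u q - u p := by
  linarith [hu hpn, hu (Nat.succ_le_of_lt hnq)]

noncomputable def jumpsBelow (u : ℕ → ℝ) (b : ℝ) (p : ℕ) : Finset ℕ :=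
  (range p).filter fun n => b < u (n + 1) - u n

theorem jumpsBelow_eq_iff {b : ℝ} {p q : ℕ} (hpq : p ≤ q) :
    jumpsBelow u b p = jumpsBelow u b q ↔ ∀ n ∈ Ico p q, u (n + 1) - u n ≤ b := by
  simp only [jumpsBelow, Finset.ext_iff, mem_filter, mem_range, mem_Ico]
  constructor
  · intro h n hn
    by_contra! hjump
    exact absurd ((h n).2 ⟨hn.2, hjump⟩).1 (not_lt.2 hn.1)
  · intro h n
    constructor
    · exact fun hn => ⟨hn.1.trans_le hpq, hn.2⟩
    · exact fun hn => ⟨not_le.1 fun hpn => (h n ⟨hpn, hn.1⟩).not_gt hn.2, hn.2⟩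

theorem abs_sub_le_of_jumpsBelow_eq (hu : Monotone u) {r : ℕ} {a b : ℝ} (ha : 0 ≤ a)
    (hgap : ∀ n < r, u (n + 1) - u n ≤ a ∨ b < u (n + 1) - u n) {p q : ℕ} (hp : p ≤ r)
    (hq : q ≤ r) (h : jumpsBelow u b p = jumpsBelow u b q) : |u p - u q| ≤ r * a := by
  wlog hpq : p ≤ q generalizing p q
  · rw [abs_sub_comm]
    exact this hq hp h.symm (le_of_not_ge hpq)
  have hsmall : ∀ n ∈ Ico p q, u (n + 1) - u n ≤ a := fun n hn =>
    (hgap n ((mem_Ico.1 hn).2.trans_le hq)).resolve_right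
      (not_lt.2 ((jumpsBelow_eq_iff hpq).1 h n hn))
  rw [abs_sub_comm, abs_of_nonneg (sub_nonneg.2 (hu hpq))]
  calc u q - u p ≤ (q - p : ℕ) * a := sub_le_mul_of_forall_sub_le hpq hsmall
    _ ≤ r * a := by gcongr; omega

theorem lt_abs_sub_of_jumpsBelow_ne (hu : Monotone u) {b : ℝ} {p q : ℕ}
    (h : jumpsBelow u b p ≠ jumpsBelow u b q) : b < |u p - u q| := by
  wlog hpq : p ≤ q generalizing p q
  · rw [abs_sub_comm]
    exact this (Ne.symm h) (le_of_not_ge hpq)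
  obtain ⟨n, hn, hjump⟩ : ∃ n ∈ Ico p q, b < u (n + 1) - u n := by
    by_contra! hno
    exact h ((jumpsBelow_eq_iff hpq).2 hno)
  rw [abs_sub_comm]
  exact (lt_sub_of_lt_sub_succ hu (mem_Ico.1 hn).1 (mem_Ico.1 hn).2 hjump).trans_le
    (le_abs_self _)

end MonotoneSequence

theorem exists_monotone_forall_exists_eq {α : Type*} [LinearOrder α] {n : ℕ}
    (s : Fin (n + 1) → α) : ∃ u : ℕ → α, Monotone u ∧ ∀ i, ∃ p ≤ n, u p = s i := by
  refine ⟨fun p => s (Tuple.sort s (Fin.clamp p n)), fun p q hpq => ?_, fun i => ?_⟩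
  · exact Tuple.monotone_sort s (Fin.mk_le_mk.2 (min_le_min_right n hpq))
  · refine ⟨(Tuple.sort s).symm i, Nat.lt_succ_iff.1 ((Tuple.sort s).symm i).isLt, ?_⟩
    simp [Fin.clamp, Nat.lt_succ_iff.1 ((Tuple.sort s).symm i).isLt]

theorem exists_forall_le_or_lt {r : ℕ} (g c b : ℕ → ℝ)
    (hcb : ∀ j j', j < j' → j' ≤ r → b j ≤ c j') :
    ∃ j ≤ r, ∀ n < r, g n ≤ c j ∨ b j < g n := by
  by_contra! h
  have hwin : ∀ j : Fin (r + 1), ∃ n : Fin r, c j < g n ∧ g n ≤ b j := fun j =>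
    let ⟨n, hn, hgn⟩ := h j (Nat.lt_succ_iff.1 j.isLt)
    ⟨⟨n, hn⟩, hgn⟩
  choose f hf using hwin
  have hdisj : ∀ j j' : Fin (r + 1), j < j' → f j ≠ f j' := fun j j' hjj' hff => by
    have := hcb j j' hjj' (Nat.lt_succ_iff.1 j'.isLt)
    linarith [(hf j).2, (hf j').1, congrArg g (congrArg Fin.val hff)]
  obtain ⟨j, j', hne, hff⟩ := Fintype.exists_ne_map_eq_of_card_lt f (by simp)
  rcases hne.lt_or_gt with hjj' | hj'j
  · exact hdisj j j' hjj' hff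
  · exact hdisj j' j hj'j hff.symm

theorem Finpartition.exists_mem_parts_iff {ι κ : Type*} [Fintype ι] [DecidableEq ι] (K : ι → κ) :
    ∃ Q : Finpartition (univ : Finset ι),
      ∀ I ∈ Q.parts, ∀ J ∈ Q.parts, ∀ i ∈ I, ∀ k ∈ J, (I = J ↔ K i = K k) := by
  classical
  refine ⟨Finpartition.ofSetoid (Setoid.ker K), fun I hI J hJ i hi k hk => ?_⟩
  rw [← Setoid.ker_def, ← Finpartition.mem_part_ofSetoid_iff_rel,
    Finpartition.part_eq_of_mem _ hI hi]
  exact ⟨fun hIJ => hIJ ▸ hk, fun hkI => Finpartition.eq_of_mem_parts _ hI hJ hkI hk⟩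

theorem Finpartition.one_lt_card_parts {ι : Type*} [DecidableEq ι] {s : Finset ι}
    (Q : Finpartition s) {i k : ι} (hi : i ∈ s) (hk : k ∈ s)
    (h : ∀ I ∈ Q.parts, i ∈ I → k ∉ I) : 1 < Q.parts.card :=
  one_lt_card.2 ⟨Q.part i, Q.part_mem.2 hi, Q.part k, Q.part_mem.2 hk,
    fun hik => h _ (Q.part_mem.2 hi) (Q.mem_part hi) (hik ▸ Q.mem_part hk)⟩

theorem exists_level_separated_finpartition {n : ℕ} (s : Fin (n + 1) → ℝ) (c b : ℕ → ℝ)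
    (hc : ∀ j ≤ n, 0 ≤ c j) (hcb : ∀ j j', j < j' → j' ≤ n → b j ≤ c j') :
    ∃ j ≤ n, ∃ Q : Finpartition (univ : Finset (Fin (n + 1))),
      (∀ I ∈ Q.parts, ∀ i ∈ I, ∀ k ∈ I, |s i - s k| ≤ n * c j) ∧
      (∀ I ∈ Q.parts, ∀ J ∈ Q.parts, I ≠ J → ∀ i ∈ I, ∀ k ∈ J, b j < |s i - s k|) := by
  obtain ⟨u, hu, hpos⟩ := exists_monotone_forall_exists_eq s
  choose p hpn hp using hpos
  obtain ⟨j, hjn, hgap⟩ := exists_forall_le_or_lt (fun m => u (m + 1) - u m) c b hcb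
  -- Two coordinates share a cluster iff the same jumps `> b j` of `u` lie below their positions.
  obtain ⟨Q, hQ⟩ := Finpartition.exists_mem_parts_iff fun i => jumpsBelow u (b j) (p i)
  refine ⟨j, hjn, Q, fun I hI i hi k hk => ?_, fun I hI J hJ hIJ i hi k hk => ?_⟩
  · rw [← hp i, ← hp k]
    exact abs_sub_le_of_jumpsBelow_eq hu (hc j hjn) hgap (hpn i) (hpn k)
      ((hQ I hI I hI i hi k hk).1 rfl)
  · rw [← hp i, ← hp k]
    exact lt_abs_sub_of_jumpsBelow_ne hu (mt (hQ I hI J hJ i hi k hk).2 hIJ)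

section Scales

variable {r : ℕ} {α β : ℕ → ℝ}

theorem strictMonoOn_of_alpha_beta_chain (hchain₁ : ∀ j, j ≤ r → α j < β (j + 1))
    (hchain₂ : ∀ j, 1 ≤ j → j ≤ r → β j < α j) : StrictMonoOn β (Set.Icc 1 (r + 1)) :=
  strictMonoOn_of_lt_succ Set.ordConnected_Icc fun a _ ha hsa => by
    rw [Order.succ_eq_add_one, Set.mem_Icc] at *
    exact (hchain₂ a ha.1 (by omega)).trans (hchain₁ a (by omega))

theorem beta_pos (hα0 : α 0 = 0) (hchain₁ : ∀ j, j ≤ r → α j < β (j + 1))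
    (hchain₂ : ∀ j, 1 ≤ j → j ≤ r → β j < α j) {j : ℕ} (h1j : 1 ≤ j) (hjr : j ≤ r + 1) :
    0 < β j :=
  calc 0 = α 0 := hα0.symm
    _ < β 1 := hchain₁ 0 r.zero_le
    _ ≤ β j := (strictMonoOn_of_alpha_beta_chain hchain₁ hchain₂).monotoneOn
      ⟨le_rfl, by omega⟩ ⟨h1j, hjr⟩ h1j

theorem alpha_nonneg (hα0 : α 0 = 0) (hchain₁ : ∀ j, j ≤ r → α j < β (j + 1))
    (hchain₂ : ∀ j, 1 ≤ j → j ≤ r → β j < α j) {j : ℕ} (hjr : j ≤ r) : 0 ≤ α j := by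
  rcases j.eq_zero_or_pos with rfl | hj
  · exact hα0.ge
  · exact (beta_pos hα0 hchain₁ hchain₂ hj (by omega)).le.trans (hchain₂ j hj hjr).le

theorem beta_succ_le_alpha_div (hα0 : α 0 = 0)
    (hαβ : ∀ j, 1 ≤ j → j ≤ r → α j = (3 + (r : ℝ)) * β j)
    (hchain₁ : ∀ j, j ≤ r → α j < β (j + 1)) (hchain₂ : ∀ j, 1 ≤ j → j ≤ r → β j < α j)
    {j j' : ℕ} (hjj' : j < j') (hj'r : j' ≤ r) : β (j + 1) ≤ α j' / r := by
  have hβj' := beta_pos hα0 hchain₁ hchain₂ (j := j') (by omega) (by omega)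
  have hr : (0 : ℝ) < r := by norm_cast; omega
  calc β (j + 1) ≤ β j' := (strictMonoOn_of_alpha_beta_chain hchain₁ hchain₂).monotoneOn
        ⟨by omega, by omega⟩ ⟨by omega, by omega⟩ hjj'
    _ ≤ α j' / r := by
      rw [le_div_iff₀ hr, hαβ j' (by omega) hj'r]
      nlinarith

theorem alpha_lt_beta_last (hchain₁ : ∀ j, j ≤ r → α j < β (j + 1))
    (hchain₂ : ∀ j, 1 ≤ j → j ≤ r → β j < α j) {j : ℕ} (hjr : j ≤ r) : α j < β (r + 1) :=
  (hchain₁ j hjr).trans_le ((strictMonoOn_of_alpha_beta_chain hchain₁ hchain₂).monotoneOn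
    ⟨by omega, by omega⟩ ⟨by omega, le_rfl⟩ (by omega))

end Scales

theorem decomposition_of_positive_orthant
    (r : ℕ) (hr : 1 ≤ r) (α β : ℕ → ℝ)
    (hα0 : α 0 = 0)
    (hαβ : ∀ j, 1 ≤ j → j ≤ r → α j = (3 + (r : ℝ)) * β j)
    (hchain₁ : ∀ j, j ≤ r → α j < β (j + 1))
    (hchain₂ : ∀ j, 1 ≤ j → j ≤ r → β j < α j) :
    ∀ s : Fin (r + 1) → ℝ, (∀ i, 0 ≤ s i) →
      -- either s̄ ∈ Δ(β_{r+1})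
      (∀ i j : Fin (r + 1), |s i - s j| ≤ β (r + 1)) ∨
      -- or s̄ ∈ Δ_Q(α_j, β_{j+1}) for some 0 ≤ j ≤ r and some partition Q with |Q| ≥ 2
      (∃ j : ℕ, j ≤ r ∧
        ∃ Q : Finpartition (Finset.univ : Finset (Fin (r + 1))),
          2 ≤ Q.parts.card ∧
          -- ρ^Q(s̄) ≤ α_j
          (∀ I ∈ Q.parts, ∀ i ∈ I, ∀ i' ∈ I, |s i - s i'| ≤ α j) ∧
          -- ρ_Q(s̄) > β_{j+1}
          (∀ I ∈ Q.parts, ∀ J ∈ Q.parts, I ≠ J →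
            ∀ i ∈ I, ∀ i' ∈ J, β (j + 1) < |s i - s i'|)) := by
  intro s _
  obtain ⟨j, hjr, Q, hdiam, hsep⟩ :=
    exists_level_separated_finpartition s (fun j => α j / r) (fun j => β (j + 1))
      (fun _ hj => div_nonneg (alpha_nonneg hα0 hchain₁ hchain₂ hj) r.cast_nonneg)
      fun _ _ => beta_succ_le_alpha_div hα0 hαβ hchain₁ hchain₂
  have hr' : (r : ℝ) * (α j / r) = α j := mul_div_cancel₀ _ (Nat.cast_ne_zero.2 (by omega))
  simp only [hr'] at hdiam
  by_cases hΔ : ∀ i i' : Fin (r + 1), |s i - s i'| ≤ β (r + 1)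
  · exact .inl hΔ
  push Not at hΔ
  obtain ⟨a, b, hab⟩ := hΔ
  refine .inr ⟨j, hjr, Q, Q.one_lt_card_parts (mem_univ a) (mem_univ b) fun I hI ha hb => ?_,
    hdiam, hsep⟩
  linarith [hdiam I hI a ha b hb, alpha_lt_beta_last hchain₁ hchain₂ hjr]
end

section
/- Let n ≥ 2, let q̄, ℓ̄ ∈ ℤ^n be linearly independent over ℝ, and let a, b > 0. Then ∑_{p ∈ ℤ} ∑_{r ∈ ℤ} ∫_{[0,1]^n} 1_{[−a,a]}(p + ⟨ū, q̄⟩) · 1_{[−b,b]}(r + ⟨ū, ℓ̄⟩) dū = 4ab, where 1_{[−c,c]} denotes the indicator function of the interval [−c,c] and ⟨·,·⟩ is the standard inner product on ℝ^n. -/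
/-!
Summing over `p` and `r` replaces the two indicators by their `ℤ`-periodizations, so the
integrand factors through the homomorphism `𝕋ⁿ → 𝕋²`, `u ↦ (⟨u, q⟩, ⟨u, ℓ⟩)`. Linear independence
of `q` and `ℓ` makes it surjective, and a continuous surjective homomorphism of compact groups
carries Haar measure to Haar measure. The integral therefore splits as the product of the
integrals over `𝕋` of the two periodizations, which are the lengths `2a` and `2b`.
-/

open MeasureTheory

noncomputable section

open Set Function
open scoped ENNReal

theorem exists_dotProduct_eq_of_linearIndependent {K m ι : Type*} [Field K] [Fintype m]
    [Fintype ι] {v : m → ι → K} (hv : LinearIndependent K v) (c : m → K) :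
    ∃ u : ι → K, ∀ i, u ⬝ᵥ v i = c i := by
  have hsurj : Surjective (Matrix.of v).mulVecLin := by
    rw [← LinearMap.range_eq_top]
    apply Submodule.eq_top_of_finrank_eq
    simpa [Matrix.rank] using LinearIndependent.rank_matrix (M := Matrix.of v) hv
  obtain ⟨u, hu⟩ := hsurj c
  exact ⟨u, fun i => by rw [dotProduct_comm]; exact congrFun hu i⟩

def periodization (f : ℝ → ℝ≥0∞) (x : ℝ) : ℝ≥0∞ := ∑' p : ℤ, f (p + x)

theorem periodic_periodization (f : ℝ → ℝ≥0∞) : Periodic (periodization f) 1 := fun x =>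
  calc ∑' p : ℤ, f (p + (x + 1)) = ∑' p : ℤ, f ((p + 1 : ℤ) + x) :=
        tsum_congr fun p => by push_cast; ring_nf
    _ = periodization f x := (Equiv.addRight (1 : ℤ)).tsum_eq fun p : ℤ => f (p + x)

variable {f g : ℝ → ℝ≥0∞}

theorem Measurable.periodization (hf : Measurable f) : Measurable (periodization f) :=
  .tsum fun p => hf.comp (measurable_const_add (p : ℝ))

theorem setLIntegral_Ioc_periodization (hf : Measurable f) :
    ∫⁻ x in Ioc 0 1, periodization f x = ∫⁻ x, f x :=
  calc ∫⁻ x in Ioc 0 1, periodization f x = ∑' p : ℤ, ∫⁻ x in Ioc 0 1, f (p + x) :=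
        lintegral_tsum fun p => (hf.comp (measurable_const_add _)).aemeasurable
    _ = ∑' p : ℤ, ∫⁻ x in Ioc (p : ℝ) (p + 1), f x := tsum_congr fun p => by
        have := (measurePreserving_add_left volume (p : ℝ)).setLIntegral_comp_preimage
          (measurableSet_Ioc (a := (p : ℝ)) (b := p + 1)) hf
        rwa [preimage_const_add_Ioc, sub_self, add_sub_cancel_left] at this
    _ = ∫⁻ x in ⋃ p : ℤ, Ioc (p : ℝ) (p + 1), f x :=
        (lintegral_iUnion (fun _ => measurableSet_Ioc) (pairwise_disjoint_Ioc_intCast ℝ) f).symm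
    _ = ∫⁻ x, f x := by rw [iUnion_Ioc_intCast, Measure.restrict_univ]

theorem Function.Periodic.measurable_lift {β : Type*} [MeasurableSpace β] {T : ℝ}
    [Fact (0 < T)] {h : ℝ → β} (hper : Periodic h T) (hh : Measurable h) :
    Measurable (hper.lift : AddCircle T → β) := by
  have : hper.lift = h ∘ (↑) ∘ AddCircle.measurableEquivIoc T 0 := funext fun z => by
    conv_lhs => rw [← AddCircle.coe_equivIoc (a := 0) (y := z)]
    rfl
  rw [this]
  exact hh.comp (measurable_subtype_coe.comp (AddCircle.measurableEquivIoc T 0).measurable)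

theorem lintegral_lift_periodization (hf : Measurable f) :
    ∫⁻ z : UnitAddCircle, (periodic_periodization f).lift z = ∫⁻ x, f x := by
  rw [← UnitAddCircle.lintegral_preimage 0, zero_add, ← setLIntegral_Ioc_periodization hf]
  rfl

theorem lintegral_periodization_mul_periodization_eq_tsum {α : Type*} [MeasurableSpace α]
    {μ : Measure α} (hf : Measurable f) (hg : Measurable g) {X Y : α → ℝ}
    (hX : Measurable X) (hY : Measurable Y) :
    ∫⁻ u, periodization f (X u) * periodization g (Y u) ∂μ
      = ∑' p : ℤ, ∑' r : ℤ, ∫⁻ u, f (p + X u) * g (r + Y u) ∂μ := by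
  have hmeas : ∀ p r : ℤ, Measurable fun u => f (p + X u) * g (r + Y u) := fun p r =>
    (hf.comp (hX.const_add _)).mul (hg.comp (hY.const_add _))
  simp only [periodization, ← ENNReal.tsum_mul_right]
  simp only [← ENNReal.tsum_mul_left]
  rw [lintegral_tsum fun p => (Measurable.tsum (hmeas p)).aemeasurable]
  exact tsum_congr fun p => lintegral_tsum fun r => (hmeas p r).aemeasurable

variable {ι : Type*} [Fintype ι]

theorem measurePreserving_coe_cube :
    MeasurePreserving (fun (u : ι → ℝ) j => (u j : UnitAddCircle))
      (volume.restrict (univ.pi fun _ => Icc 0 1)) volume := by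
  rw [pi_univ_Icc, volume_pi, ← Measure.restrict_congr_set Measure.univ_pi_Ioc_ae_eq_Icc,
    Measure.restrict_pi_pi]
  exact measurePreserving_pi _ _ fun _ => by simpa using UnitAddCircle.measurePreserving_mk 0

def dotProductAddCircle (q : ι → ℤ) : (ι → UnitAddCircle) →+ UnitAddCircle where
  toFun x := ∑ j, q j • x j
  map_zero' := by simp
  map_add' x y := by simp [smul_add, Finset.sum_add_distrib]

theorem dotProductAddCircle_coe (q : ι → ℤ) (u : ι → ℝ) :
    dotProductAddCircle q (fun j => (u j : UnitAddCircle))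
      = ((∑ j, u j * q j : ℝ) : UnitAddCircle) := by
  rw [← QuotientAddGroup.mk'_apply, map_sum]
  refine Finset.sum_congr rfl fun j _ => ?_
  rw [mul_comm, ← zsmul_eq_mul, map_zsmul]
  rfl

theorem continuous_dotProductAddCircle (q : ι → ℤ) : Continuous (dotProductAddCircle q) :=
  continuous_finsetSum _ fun j _ => (continuous_apply j).zsmul _

theorem surjective_dotProductAddCircle_prod {q ℓ : ι → ℤ}
    (hindep : LinearIndependent ℝ ![(fun j => (q j : ℝ)), (fun j => (ℓ j : ℝ))]) :
    Surjective ((dotProductAddCircle q).prod (dotProductAddCircle ℓ)) := by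
  rintro ⟨x, y⟩
  obtain ⟨x, rfl⟩ := QuotientAddGroup.mk_surjective x
  obtain ⟨y, rfl⟩ := QuotientAddGroup.mk_surjective y
  obtain ⟨u, hu⟩ := exists_dotProduct_eq_of_linearIndependent hindep ![x, y]
  refine ⟨fun j => (u j : UnitAddCircle), ?_⟩
  rw [AddMonoidHom.prod_apply, dotProductAddCircle_coe, dotProductAddCircle_coe]
  exact Prod.ext (congrArg ((↑) : ℝ → UnitAddCircle) (hu 0))
    (congrArg ((↑) : ℝ → UnitAddCircle) (hu 1))

theorem lintegral_cube_periodization_mul_periodization {q ℓ : ι → ℤ}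
    (hindep : LinearIndependent ℝ ![(fun j => (q j : ℝ)), (fun j => (ℓ j : ℝ))])
    (hf : Measurable f) (hg : Measurable g) :
    ∫⁻ u in univ.pi (fun _ : ι => Icc (0 : ℝ) 1),
        periodization f (∑ j, u j * q j) * periodization g (∑ j, u j * ℓ j)
      = (∫⁻ x, f x) * ∫⁻ x, g x := by
  set φ := (dotProductAddCircle q).prod (dotProductAddCircle ℓ)
  set F := (periodic_periodization f).lift
  set G := (periodic_periodization g).lift
  have hF := (periodic_periodization f).measurable_lift hf.periodization
  have hG := (periodic_periodization g).measurable_lift hg.periodization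
  have hφ : MeasurePreserving φ volume (volume.prod volume) :=
    AddMonoidHom.measurePreserving
      ((continuous_dotProductAddCircle q).prodMk (continuous_dotProductAddCircle ℓ))
      (surjective_dotProductAddCircle_prod hindep)
      (by simp [volume_pi, Measure.pi_univ, ← univ_prod_univ, Measure.prod_prod])
  calc _ = ∫⁻ u in univ.pi (fun _ : ι => Icc (0 : ℝ) 1),
          F (φ fun j => (u j : UnitAddCircle)).1 * G (φ fun j => (u j : UnitAddCircle)).2 := by
        simp only [φ, AddMonoidHom.prod_apply, dotProductAddCircle_coe, F, G, Periodic.lift_coe]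
    _ = ∫⁻ x : ι → UnitAddCircle, F (φ x).1 * G (φ x).2 :=
        measurePreserving_coe_cube.lintegral_comp
          ((hF.comp (measurable_fst.comp hφ.measurable)).mul
            (hG.comp (measurable_snd.comp hφ.measurable)))
    _ = ∫⁻ z : UnitAddCircle × UnitAddCircle, F z.1 * G z.2 :=
        hφ.lintegral_comp ((hF.comp measurable_fst).mul (hG.comp measurable_snd))
    _ = (∫⁻ z, F z) * ∫⁻ z, G z := lintegral_prod_mul hF.aemeasurable hG.aemeasurable
    _ = (∫⁻ x, f x) * ∫⁻ x, g x := by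
        rw [lintegral_lift_periodization hf, lintegral_lift_periodization hg]

theorem tsum_tsum_integral_eq_toReal {α β γ : Type*} [MeasurableSpace α] {μ : Measure α}
    {F : β → γ → α → ℝ} (hF : ∀ p r x, 0 ≤ F p r x)
    (hmeas : ∀ p r, AEStronglyMeasurable (F p r) μ)
    (hfin : ∑' p, ∑' r, ∫⁻ x, ENNReal.ofReal (F p r x) ∂μ ≠ ∞) :
    ∑' p, ∑' r, ∫ x, F p r x ∂μ = (∑' p, ∑' r, ∫⁻ x, ENNReal.ofReal (F p r x) ∂μ).toReal := by
  have hrow : ∀ p, ∑' r, ∫⁻ x, ENNReal.ofReal (F p r x) ∂μ ≠ ∞ := fun p =>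
    ne_top_of_le_ne_top hfin (ENNReal.le_tsum p)
  have hentry : ∀ p r, ∫⁻ x, ENNReal.ofReal (F p r x) ∂μ ≠ ∞ := fun p r =>
    ne_top_of_le_ne_top (hrow p) (ENNReal.le_tsum r)
  simp only [integral_eq_lintegral_of_nonneg_ae (.of_forall (hF _ _)) (hmeas _ _)]
  rw [ENNReal.tsum_toReal_eq hrow]
  exact tsum_congr fun p => (ENNReal.tsum_toReal_eq (hentry p)).symm

theorem ofReal_indicator_one_mul_indicator_one {α β : Type*} (s : Set α) (t : Set β) (x : α)
    (y : β) : ENNReal.ofReal (s.indicator 1 x * t.indicator 1 y)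
      = s.indicator 1 x * t.indicator 1 y := by
  by_cases hx : x ∈ s <;> by_cases hy : y ∈ t <;> simp [hx, hy]

theorem tsum_tsum_setLIntegral_cube_indicator_mul_indicator {q ℓ : ι → ℤ}
    (hindep : LinearIndependent ℝ ![(fun j => (q j : ℝ)), (fun j => (ℓ j : ℝ))])
    {s t : Set ℝ} (hs : MeasurableSet s) (ht : MeasurableSet t) :
    ∑' p : ℤ, ∑' r : ℤ, ∫⁻ u in univ.pi (fun _ : ι => Icc (0 : ℝ) 1),
        s.indicator 1 (p + ∑ j, u j * q j) * t.indicator 1 (r + ∑ j, u j * ℓ j)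
      = volume s * volume t := by
  rw [← lintegral_periodization_mul_periodization_eq_tsum (measurable_one.indicator hs)
      (measurable_one.indicator ht) (by fun_prop) (by fun_prop),
    lintegral_cube_periodization_mul_periodization hindep (measurable_one.indicator hs)
      (measurable_one.indicator ht),
    lintegral_indicator_one hs, lintegral_indicator_one ht]

theorem double_periodization_identity_general
    (n : ℕ)
    (q ℓ : Fin n → ℤ)
    (hindep : LinearIndependent ℝ
      ![(fun j => (q j : ℝ) : Fin n → ℝ), (fun j => (ℓ j : ℝ) : Fin n → ℝ)])
    (a b : ℝ) (ha : 0 < a) (hb : 0 < b) :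
    (∑' p : ℤ, ∑' r : ℤ,
      ∫ u in Set.univ.pi (fun _ : Fin n => Set.Icc (0 : ℝ) 1),
        (Set.indicator (Set.Icc (-a) a) 1 ((p : ℝ) + ∑ j, u j * (q j : ℝ))) *
        (Set.indicator (Set.Icc (-b) b) 1 ((r : ℝ) + ∑ j, u j * (ℓ j : ℝ))))
      = 4 * a * b := by
  have hvol := tsum_tsum_setLIntegral_cube_indicator_mul_indicator hindep
    (measurableSet_Icc (a := -a) (b := a)) (measurableSet_Icc (a := -b) (b := b))
  rw [Real.volume_Icc, Real.volume_Icc] at hvol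
  rw [tsum_tsum_integral_eq_toReal]
  · simp only [ofReal_indicator_one_mul_indicator_one, hvol]
    rw [ENNReal.toReal_mul, ENNReal.toReal_ofReal (by linarith),
      ENNReal.toReal_ofReal (by linarith)]
    ring
  · exact fun _ _ _ => mul_nonneg (indicator_nonneg (fun _ _ => zero_le_one) _)
      (indicator_nonneg (fun _ _ => zero_le_one) _)
  · exact fun _ _ => (((measurable_one.indicator measurableSet_Icc).comp (by fun_prop)).mul
      ((measurable_one.indicator measurableSet_Icc).comp (by fun_prop))).aestronglyMeasurable
  · simp only [ofReal_indicator_one_mul_indicator_one, hvol]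
    finiteness

theorem double_periodization_identity
    (n : ℕ) (hn : 2 ≤ n)
    (q ℓ : Fin n → ℤ)
    (hindep : LinearIndependent ℝ
      ![(fun j => (q j : ℝ) : Fin n → ℝ), (fun j => (ℓ j : ℝ) : Fin n → ℝ)])
    (a b : ℝ) (ha : 0 < a) (hb : 0 < b) :
    (∑' p : ℤ, ∑' r : ℤ,
      ∫ u in Set.univ.pi (fun _ : Fin n => Set.Icc (0 : ℝ) 1),
        (Set.indicator (Set.Icc (-a) a) 1 ((p : ℝ) + ∑ j, u j * (q j : ℝ))) *
        (Set.indicator (Set.Icc (-b) b) 1 ((r : ℝ) + ∑ j, u j * (ℓ j : ℝ))))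
      = 4 * a * b :=
  double_periodization_identity_general n q ℓ hindep a b ha hb
end
end
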